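/- The only pairs of rational numbers (w, z) satisfying z² = w(w³ − 1) are (0, 0), (1, 0), (−1/2, 3/4) and (−1/2, −3/4); in particular, for w ∉ {0, 1, −1/2} the rational number w(w³ − 1) is never a square. -/

import Mathlib

private lemma odd_sq_mod8 {x : ℤ} (h : x % 2 = 1) : x ^ 2 % 8 = 1 := by
  obtain ⟨k, rfl⟩ : ∃ k, x = 2*k+1 := ⟨x/2, by omega⟩
  have h4 : (2*k+1)^2 = 4*(k*(k+1)) + 1 := by ring
  have h5 : (k*(k+1)) % 2 = 0 := Int.even_iff.mp (Int.even_mul_succ_self k)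
  omega

private lemma odd_pow4_mod16 {x : ℤ} (h : x % 2 = 1) : x ^ 4 % 16 = 1 := by
  have h1 := odd_sq_mod8 h
  have h2 : x^4 = (x^2)^2 := by ring
  obtain ⟨t, ht⟩ : ∃ t, x^2 = 8*t+1 := ⟨x^2/8, by omega⟩
  have h3 : x^4 = 16*(4*(t*t)+t) + 1 := by rw [h2, ht]; ring
  omega

private lemma sq_mod3 {x : ℤ} (h : ¬ (3:ℤ) ∣ x) : x ^ 2 % 3 = 1 := by
  rw [Int.dvd_iff_emod_eq_zero] at h
  have h3 : x % 3 = 1 ∨ x % 3 = 2 := by omega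
  have h2 : x^2 % 3 = ((x%3)*(x%3)) % 3 := by rw [pow_two, Int.mul_emod]
  rcases h3 with h | h <;> rw [h] at h2 <;> omega

private lemma sq_mod3' (x : ℤ) : x ^ 2 % 3 = 0 ∨ x ^ 2 % 3 = 1 := by
  have h3 : x % 3 = 0 ∨ x % 3 = 1 ∨ x % 3 = 2 := by omega
  have h2 : x^2 % 3 = ((x%3)*(x%3)) % 3 := by rw [pow_two, Int.mul_emod]
  rcases h3 with h | h | h <;> rw [h] at h2 <;> omega

private lemma sq_mod4 (x : ℤ) : x ^ 2 % 4 = 0 ∨ x ^ 2 % 4 = 1 := by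
  rcases Int.even_or_odd x with ⟨k, hk⟩ | ⟨k, hk⟩
  · left
    have : x^2 = 4*(k*k) := by subst hk; ring
    omega
  · right
    have := odd_sq_mod8 (x := x) (by omega)
    omega

private lemma even_pow4 {x : ℤ} (h : x % 2 = 0) : ∃ t, x^4 = 16*t := by
  obtain ⟨k, rfl⟩ : ∃ k, x = 2*k := ⟨x/2, by omega⟩
  exact ⟨k^4, by ring⟩

private lemma natAbs_of_sq_eq {a b : ℤ} (h : a^2 = b^2) : a.natAbs = b.natAbs := by
  have h1 : a.natAbs^2 = b.natAbs^2 := by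
    have := congrArg Int.natAbs h
    simpa [Int.natAbs_pow] using this
  exact Nat.pow_left_injective (by norm_num) h1

private lemma eq_one_of_pos_of_sq_le_one {w : ℤ} (h1 : 0 < w) (h2 : w^2 ≤ 1) : w = 1 := by
  nlinarith

private lemma eq_one_of_cubic {w : ℤ} (h0 : 0 < w) (h : 3*w^2*(w^2-1) = 0) : w = 1 := by
  rcases mul_eq_zero.mp h with h1 | h1
  · exfalso
    rcases mul_eq_zero.mp h1 with h2 | h2 <;> nlinarith
  · nlinarith

private lemma coprime_of_nat_prime_dvd {a b : ℤ}
    (h : ∀ p : ℕ, p.Prime → (p:ℤ) ∣ a → (p:ℤ) ∣ b → False) : IsCoprime a b := by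
  rw [Int.isCoprime_iff_gcd_eq_one]
  by_contra hg
  obtain ⟨p, pp, pd⟩ := Nat.exists_prime_and_dvd hg
  exact h p pp ((Int.natCast_dvd_natCast.mpr pd).trans (Int.gcd_dvd_left _ _))
    ((Int.natCast_dvd_natCast.mpr pd).trans (Int.gcd_dvd_right _ _))

private lemma prime_eq_two {p : ℕ} (pp : p.Prime) (h : (p:ℤ) ∣ 4) : p = 2 := by
  have h1 : (p:ℤ) ∣ (2:ℤ)^2 := by norm_num at h ⊢; exact h
  have h2 : (p:ℤ) ∣ (2:ℤ) := Int.Prime.dvd_pow' pp h1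
  have h3 : p ∣ 2 := by exact_mod_cast h2
  rcases Nat.prime_two.eq_one_or_self_of_dvd p h3 with h4 | h4
  · exact absurd h4 pp.ne_one
  · exact h4

private lemma prime_eq_three {p : ℕ} (pp : p.Prime) (h : (p:ℤ) ∣ 3) : p = 3 := by
  have h3 : p ∣ 3 := by exact_mod_cast h
  rcases Nat.prime_three.eq_one_or_self_of_dvd p h3 with h4 | h4
  · exact absurd h4 pp.ne_one
  · exact h4

private lemma unit_contra {p : ℕ} (pp : p.Prime) (h : IsUnit ((p:ℕ):ℤ)) : False := by
  rw [Int.isUnit_iff] at h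
  have := pp.two_le
  rcases h with h | h <;> omega

private lemma pow4_of_coprime {a b c : ℤ} (h : IsCoprime a b) (ha : 0 < a)
    (he : a * b = c ^ 4) : ∃ u : ℤ, 0 < u ∧ a = u ^ 4 := by
  obtain ⟨d, hd⟩ := exists_associated_pow_of_mul_eq_pow' h he
  rcases Int.associated_iff.mp hd with h1 | h1
  · have hd0 : d ≠ 0 := by rintro rfl; simp at h1; omega
    refine ⟨|d|, abs_pos.mpr hd0, ?_⟩
    rw [pow_abs, abs_of_nonneg (by positivity), h1]
  · exfalso
    have h2 : (0:ℤ) ≤ d ^ 4 := by positivity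
    omega

private lemma split3 {c₁ c₂ Y : ℤ} (hco : IsCoprime c₁ c₂) (h1 : 0 < c₁) (h2 : 0 < c₂)
    (he : c₁ * c₂ = 3 * Y ^ 4) (hY : Y ≠ 0) :
    ∃ u v : ℤ, 0 < u ∧ 0 < v ∧ (u * v) ^ 2 = Y ^ 2 ∧
      ((c₁ = 3 * u ^ 4 ∧ c₂ = v ^ 4) ∨ (c₁ = u ^ 4 ∧ c₂ = 3 * v ^ 4)) := by
  clear hY
  have h3 : (3:ℤ) ∣ c₁ * c₂ := he ▸ Dvd.intro _ rfl
  have key : ∀ d₁ d₂ : ℤ, IsCoprime d₁ d₂ → 0 < d₁ → 0 < d₂ → d₁ * d₂ = 3 * Y ^ 4 →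
      (3:ℤ) ∣ d₁ → ∃ u v : ℤ, 0 < u ∧ 0 < v ∧ (u*v)^2 = Y^2 ∧ d₁ = 3 * u ^ 4 ∧ d₂ = v ^ 4 := by
    intro d₁ d₂ hco h1 h2 he h3
    obtain ⟨d, hd⟩ := h3
    have hdd : d * d₂ = Y ^ 4 := by
      apply mul_left_cancel₀ (a := (3:ℤ)) (by norm_num)
      rw [← mul_assoc, ← hd, he]
    have hcod : IsCoprime d d₂ := IsCoprime.of_mul_left_right (hd ▸ hco)
    obtain ⟨u, hu0, hu⟩ := pow4_of_coprime hcod (by nlinarith) hdd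
    obtain ⟨v, hv0, hv⟩ := pow4_of_coprime hcod.symm h2 (by rw [mul_comm]; exact hdd)
    refine ⟨u, v, hu0, hv0, ?_, by rw [hd, hu], hv⟩
    have h4 : ((u*v)^2 - Y^2) * ((u*v)^2 + Y^2) = 0 := by
      have h7 : (u^4) * (v^4) = Y^4 := by rw [← hu, ← hv]; exact hdd
      linear_combination h7
    rcases mul_eq_zero.mp h4 with h5 | h5
    · linarith
    · rcases eq_or_ne Y 0 with rfl | hY0
      · nlinarith
      · exfalso
        have h6 : (0:ℤ) < (u*v)^2 := by positivity
        have h7 : (0:ℤ) < Y^2 := by positivity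
        linarith
  rcases (Int.prime_three.dvd_mul.mp h3) with h4 | h4
  · obtain ⟨u, v, hu, hv, hs, e1, e2⟩ := key c₁ c₂ hco h1 h2 he h4
    exact ⟨u, v, hu, hv, hs, Or.inl ⟨e1, e2⟩⟩
  · obtain ⟨u, v, hu, hv, hs, e1, e2⟩ := key c₂ c₁ hco.symm h2 h1 (by rw [mul_comm]; exact he) h4
    exact ⟨v, u, hv, hu, by rw [mul_comm v u]; exact hs, Or.inr ⟨e2, e1⟩⟩

/-- Key descent lemma: the quartic `Z² = X⁴ - 3X²Y² + 3Y⁴` has only trivial coprime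
solutions. -/
private lemma keyQ : ∀ n : ℕ, ∀ X Y Z : ℤ, Y.natAbs = n → IsCoprime X Y →
    Z ^ 2 = X ^ 4 - 3 * X ^ 2 * Y ^ 2 + 3 * Y ^ 4 → X ^ 2 = 1 ∧ Y ^ 2 ≤ 1 := by
  intro n
  induction n using Nat.strong_induction_on with
  | _ n IH =>
  intro X Y Z hn hco hQ
  rcases eq_or_ne Y 0 with rfl | hY0
  · rcases Int.isUnit_iff.mp (isCoprime_zero_right.mp hco) with rfl | rfl <;> norm_num
  have h3X : ¬ (3:ℤ) ∣ X := by
    rintro ⟨x, rfl⟩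
    have h1 : (3:ℤ) ∣ Z := by
      apply Int.prime_three.dvd_of_dvd_pow (n := 2)
      exact ⟨27*x^4 - 9*(x^2*Y^2) + Y^4, by linear_combination hQ⟩
    obtain ⟨z, rfl⟩ := h1
    have h9 : 3*Y^4 = 9*z^2 - 81*x^4 + 27*(x^2*Y^2) := by linear_combination -hQ
    have h2 : (3:ℤ) ∣ Y := by
      apply Int.prime_three.dvd_of_dvd_pow (n := 4)
      exact ⟨z^2 - 9*x^4 + 3*(x^2*Y^2), by linarith⟩
    have h4 := hco.isUnit_of_dvd' ⟨x, rfl⟩ h2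
    rw [Int.isUnit_iff] at h4
    rcases h4 with h4 | h4 <;> norm_num at h4
  have hX2 : X % 2 = 1 := by
    rcases Int.emod_two_eq X with hXe | hXe
    · exfalso
      obtain ⟨x, rfl⟩ : ∃ x, X = 2*x := ⟨X/2, by omega⟩
      have hY2 : Y % 2 = 1 := by
        rcases Int.emod_two_eq Y with h2 | h2
        · exfalso
          have h4 := hco.isUnit_of_dvd' (⟨x, rfl⟩ : (2:ℤ) ∣ 2*x) ⟨Y/2, by omega⟩
          rw [Int.isUnit_iff] at h4
          rcases h4 with h4 | h4 <;> norm_num at h4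
        · exact h2
      have hQ' : Z^2 = 16*x^4 - 12*(x^2*Y^2) + 3*(Y^4) := by linear_combination hQ
      have h16 : Y^4 % 16 = 1 := odd_pow4_mod16 hY2
      have h4 := sq_mod4 Z
      omega
    · exact hXe
  have hX8 : X^2 % 8 = 1 := odd_sq_mod8 hX2
  have hX16 : X^4 % 16 = 1 := odd_pow4_mod16 hX2
  rcases Int.emod_two_eq Y with hY2 | hY2
  · -- Y even: contradiction
    exfalso
    obtain ⟨Y₁, rfl⟩ : ∃ y, Y = 2*y := ⟨Y/2, by omega⟩
    have hY₁0 : Y₁ ≠ 0 := by simpa using hY0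
    have hQ' : Z^2 = X^4 - 12*(X^2*Y₁^2) + 48*(Y₁^4) := by linear_combination hQ
    have hZ2 : Z % 2 = 1 := by
      rcases Int.emod_two_eq Z with h | h
      · exfalso
        obtain ⟨z, rfl⟩ : ∃ z, Z = 2*z := ⟨Z/2, by omega⟩
        have h5 : (2*z)^2 = 4*(z*z) := by ring
        omega
      · exact h
    have hZ₀sq : |Z|^2 = Z^2 := sq_abs Z
    set Z₀ := |Z| with hZ₀def
    have hZ₀2 : Z₀ % 2 = 1 := by rcases abs_cases Z with ⟨h5, _⟩ | ⟨h5, _⟩ <;> omega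
    have hQ₀ : Z₀^2 = X^4 - 12*(X^2*Y₁^2) + 48*(Y₁^4) := by rw [hZ₀sq]; exact hQ'
    obtain ⟨a', ha'⟩ : ∃ t, Z₀ + (X^2 - 6*Y₁^2) = 2*t := ⟨(Z₀ + (X^2 - 6*Y₁^2))/2, by omega⟩
    obtain ⟨b', hb'⟩ : ∃ t, Z₀ - (X^2 - 6*Y₁^2) = 2*t := ⟨(Z₀ - (X^2 - 6*Y₁^2))/2, by omega⟩
    have hsum : a' + b' = Z₀ := by omega
    have hdiff : a' - b' = X^2 - 6*Y₁^2 := by omega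
    have hprod : a' * b' = 3 * Y₁^4 := by
      have h4 : (2*a') * (2*b') = Z₀^2 - (X^2-6*Y₁^2)^2 := by rw [← ha', ← hb']; ring
      have h5 : Z₀^2 - (X^2-6*Y₁^2)^2 = 12*Y₁^4 := by linear_combination hQ₀
      have h6 : 4*(a'*b') = 12*Y₁^4 := by linear_combination h4 + h5
      omega
    have hZ₀pos : 0 < Z₀ := by
      have h7 : (0:ℤ) ≤ |Z| := abs_nonneg Z
      rw [← hZ₀def] at h7
      omega
    have hpos : 0 < a' ∧ 0 < b' := by
      have h4 : 0 < a' * b' := by rw [hprod]; positivity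
      rcases mul_pos_iff.mp h4 with h5 | h5
      · exact h5
      · exfalso; omega
    have hcop' : IsCoprime a' b' := by
      apply coprime_of_nat_prime_dvd
      intro p pp hpa hpb
      have hz : (p:ℤ) ∣ Z₀ := hsum ▸ dvd_add hpa hpb
      have hA' : (p:ℤ) ∣ X^2 - 6*Y₁^2 := hdiff ▸ dvd_sub hpa hpb
      have hp2 : p ≠ 2 := by
        rintro rfl
        rw [Int.dvd_iff_emod_eq_zero] at hz
        omega
      have hprod' : (p:ℤ) ∣ 3*Y₁^4 := hprod ▸ hpa.mul_right b'
      rcases Int.Prime.dvd_mul' pp hprod' with h3 | hY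
      · have hp3 : p = 3 := prime_eq_three pp h3
        subst hp3
        have h3X2 : (3:ℤ) ∣ X^2 := by
          have h6 := dvd_add hA' (⟨2*Y₁^2, rfl⟩ : (3:ℤ) ∣ 3*(2*Y₁^2))
          rwa [show X^2 - 6*Y₁^2 + 3*(2*Y₁^2) = X^2 by ring] at h6
        exact h3X (Int.prime_three.dvd_of_dvd_pow h3X2)
      · have hYp : (p:ℤ) ∣ Y₁ := Int.Prime.dvd_pow' pp hY
        have hX2' : (p:ℤ) ∣ X^2 := by
          have h6 := dvd_add hA' (Dvd.dvd.mul_left hYp (6*Y₁))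
          rwa [show X^2 - 6*Y₁^2 + 6*Y₁*Y₁ = X^2 by ring] at h6
        have hXp : (p:ℤ) ∣ X := Int.Prime.dvd_pow' pp hX2'
        exact unit_contra pp (hco.isUnit_of_dvd' hXp (Dvd.dvd.mul_left hYp 2))
    obtain ⟨m, nn, hm0, hn0, hs, hcases⟩ := split3 hcop' hpos.1 hpos.2 hprod hY₁0
    have hY₁sq : Y₁^2 = m^2*nn^2 := by linear_combination -hs
    rcases hcases with ⟨hA3, hBn⟩ | ⟨hAn, hB3⟩
    · -- a' = 3m⁴, b' = nn⁴ : mod 3 contradiction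
      have heq : X^2 = 3*m^4 - nn^4 + 6*(m^2*nn^2) := by
        rw [hA3, hBn] at hdiff
        linear_combination -hdiff + 6*hY₁sq
      have hX3 : X^2 % 3 = 1 := sq_mod3 h3X
      have hn4 := sq_mod3' (nn^2)
      rw [show (nn^2)^2 = nn^4 by ring] at hn4
      omega
    · -- a' = nn⁴, b' = 3m⁴ : second descent
      have heq2 : X^2 = m^4 - 3*nn^4 + 6*(nn^2*m^2) := by
        rw [hAn, hB3] at hdiff
        linear_combination -hdiff + 6*hY₁sq
      have hnn0 : m ≠ 0 := hm0.ne'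
      have hn0' : nn ≠ 0 := hn0.ne'
      have hcopnm : IsCoprime m nn := by
        have h6 : IsCoprime (m^4) (3*nn^4) := by rw [← hAn, ← hB3]; exact hcop'
        have h7 := IsCoprime.of_isCoprime_of_dvd_left h6 (dvd_pow_self m (by norm_num : (4:ℕ) ≠ 0))
        exact IsCoprime.of_isCoprime_of_dvd_right h7
          ((dvd_pow_self nn (by norm_num : (4:ℕ) ≠ 0)).mul_left 3)
      have hSodd : (m^2 + 3*nn^2) % 2 = 1 := by
        rcases Int.emod_two_eq nn with hm2 | hm2 <;> rcases Int.emod_two_eq m with hnn2 | hnn2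
        · exfalso
          have h6 := hcopnm.isUnit_of_dvd' (⟨m/2, by omega⟩ : (2:ℤ) ∣ m)
            (⟨nn/2, by omega⟩ : (2:ℤ) ∣ nn)
          rw [Int.isUnit_iff] at h6
          rcases h6 with h6 | h6 <;> norm_num at h6
        · obtain ⟨k, rfl⟩ : ∃ k, nn = 2*k := ⟨nn/2, by omega⟩
          have h7 : (2*k)^2 = 4*(k*k) := by ring
          have h8 := odd_sq_mod8 hnn2
          omega
        · obtain ⟨k, rfl⟩ : ∃ k, m = 2*k := ⟨m/2, by omega⟩
          have h7 : (2*k)^2 = 4*(k*k) := by ring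
          have h8 := odd_sq_mod8 hm2
          omega
        · exfalso
          have h6 : nn^4 % 16 = 1 := odd_pow4_mod16 hm2
          have h7 : m^4 % 16 = 1 := odd_pow4_mod16 hnn2
          have hodd : (nn*m) % 2 = 1 :=
            Int.odd_iff.mp ((Int.odd_iff.mpr hm2).mul (Int.odd_iff.mpr hnn2))
          have h8 : (nn*m)^2 % 8 = 1 := odd_sq_mod8 hodd
          have h9 : nn^2*m^2 = (nn*m)^2 := by ring
          omega
      have hX₀sq : |X|^2 = X^2 := sq_abs X
      set X₀ := |X| with hX₀def
      have hX₀2 : X₀ % 2 = 1 := by rcases abs_cases X with ⟨h5, _⟩ | ⟨h5, _⟩ <;> omega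
      obtain ⟨p', hp'⟩ : ∃ t, m^2 + 3*nn^2 - X₀ = 2*t := ⟨(m^2 + 3*nn^2 - X₀)/2, by omega⟩
      obtain ⟨q', hq'⟩ : ∃ t, m^2 + 3*nn^2 + X₀ = 2*t := ⟨(m^2 + 3*nn^2 + X₀)/2, by omega⟩
      have hsum2 : p' + q' = m^2 + 3*nn^2 := by omega
      have hdiff2 : q' - p' = X₀ := by omega
      have hprod2 : p' * q' = 3 * nn^4 := by
        have h4 : (2*p') * (2*q') = (m^2+3*nn^2)^2 - X₀^2 := by rw [← hp', ← hq']; ring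
        have h5 : (m^2+3*nn^2)^2 - X₀^2 = 12*nn^4 := by
          rw [hX₀sq]; linear_combination -heq2
        have h6 : 4*(p'*q') = 12*nn^4 := by linear_combination h4 + h5
        omega
      have hpos2 : 0 < p' ∧ 0 < q' := by
        have h4 : 0 < p' * q' := by rw [hprod2]; positivity
        have h5 : 0 < m^2 + 3*nn^2 := by positivity
        rcases mul_pos_iff.mp h4 with h6 | h6
        · exact h6
        · exfalso; omega
      have hcop2 : IsCoprime p' q' := by
        apply coprime_of_nat_prime_dvd
        intro p pp hpa hpb
        have hzS : (p:ℤ) ∣ m^2 + 3*nn^2 := hsum2 ▸ dvd_add hpa hpb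
        have hzX : (p:ℤ) ∣ X₀ := hdiff2 ▸ dvd_sub hpb hpa
        have hzX' : (p:ℤ) ∣ X := by rw [hX₀def] at hzX; exact (dvd_abs _ _).mp hzX
        have hp2 : p ≠ 2 := by
          rintro rfl
          have h6 : ((2:ℕ):ℤ) ∣ p' + q' := dvd_add hpa hpb
          rw [hsum2, Int.dvd_iff_emod_eq_zero] at h6
          push_cast at h6
          omega
        have hprod' : (p:ℤ) ∣ 3*nn^4 := hprod2 ▸ hpa.mul_right q'
        rcases Int.Prime.dvd_mul' pp hprod' with h3 | hm
        · have hp3 : p = 3 := prime_eq_three pp h3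
          subst hp3
          exact h3X (by exact_mod_cast hzX')
        · have hmp : (p:ℤ) ∣ nn := Int.Prime.dvd_pow' pp hm
          have hnn2' : (p:ℤ) ∣ m^2 := by
            have h6 := dvd_sub hzS (Dvd.dvd.mul_left hmp (3*nn))
            rwa [show m^2 + 3*nn^2 - 3*nn*nn = m^2 by ring] at h6
          have hnnp : (p:ℤ) ∣ m := Int.Prime.dvd_pow' pp hnn2'
          exact unit_contra pp (hcopnm.isUnit_of_dvd' hnnp hmp)
      obtain ⟨w₁, w₂, hw₁, hw₂, hws, hwcases⟩ := split3 hcop2 hpos2.1 hpos2.2 hprod2 hn0'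
      have hmsq : nn^2 = w₁^2*w₂^2 := by linear_combination -hws
      have hnabs : n = 2 * (w₁.natAbs * w₂.natAbs * m.natAbs) := by
        have e1 : (2*Y₁).natAbs = n := hn
        have e2 : (m*nn).natAbs = Y₁.natAbs := natAbs_of_sq_eq hs
        have e3 : (w₁*w₂).natAbs = nn.natAbs := natAbs_of_sq_eq hws
        rw [Int.natAbs_mul] at e1 e2 e3
        have e1' : 2 * Y₁.natAbs = n := by
          rw [← e1]; norm_num
        rw [← e1', ← e2, ← e3]; ring
      have hw₁a : 1 ≤ w₁.natAbs := by omega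
      have hw₂a : 1 ≤ w₂.natAbs := by omega
      have hnna : 1 ≤ m.natAbs := by omega
      rcases hwcases with ⟨hP3, hQn⟩ | ⟨hPn, hQ3w⟩
      · -- p' = 3w₁⁴, q' = w₂⁴
        have hQnew : m^2 = w₂^4 - 3*w₂^2*w₁^2 + 3*w₁^4 := by
          rw [hP3, hQn] at hsum2
          linear_combination -hsum2 - 3*hmsq
        have hcopw : IsCoprime w₂ w₁ := by
          have h6 : IsCoprime (3*w₁^4) (w₂^4) := by rw [← hP3, ← hQn]; exact hcop2
          have h7 := IsCoprime.of_isCoprime_of_dvd_right h6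
            (dvd_pow_self w₂ (by norm_num : (4:ℕ) ≠ 0))
          exact (IsCoprime.of_isCoprime_of_dvd_left h7
            ((dvd_pow_self w₁ (by norm_num : (4:ℕ) ≠ 0)).mul_left 3)).symm
        have hlt : w₁.natAbs < n := by
          have hK : n = 2*(w₁.natAbs * (w₂.natAbs * m.natAbs)) := by rw [hnabs]; ring
          have h8 : 1 ≤ w₂.natAbs * m.natAbs := Nat.one_le_iff_ne_zero.mpr (by positivity)
          have h9 : w₁.natAbs ≤ w₁.natAbs * (w₂.natAbs * m.natAbs) := by
            simpa using Nat.mul_le_mul_left w₁.natAbs h8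
          omega
        obtain ⟨hres1, hres2⟩ := IH (w₁.natAbs) (hn ▸ hlt) w₂ w₁ m rfl hcopw hQnew
        have hw₁1 : w₁ = 1 := eq_one_of_pos_of_sq_le_one hw₁ hres2
        have hw₂1 : w₂ = 1 := eq_one_of_pos_of_sq_le_one hw₂ hres1.le
        subst hw₁1 hw₂1
        have hnn1 : m^2 = 1 := by rw [hQnew]; ring
        have hm1 : nn^2 = 1 := by rw [hmsq]; ring
        have hXsq : X^2 = 4 := by
          rw [heq2, show m^4 = (m^2)^2 by ring, show nn^4 = (nn^2)^2 by ring, hnn1, hm1]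
          ring
        omega
      · -- p' = w₁⁴, q' = 3w₂⁴
        have hQnew : m^2 = w₁^4 - 3*w₁^2*w₂^2 + 3*w₂^4 := by
          rw [hPn, hQ3w] at hsum2
          linear_combination -hsum2 - 3*hmsq
        have hcopw : IsCoprime w₁ w₂ := by
          have h6 : IsCoprime (w₁^4) (3*w₂^4) := by rw [← hPn, ← hQ3w]; exact hcop2
          have h7 := IsCoprime.of_isCoprime_of_dvd_left h6
            (dvd_pow_self w₁ (by norm_num : (4:ℕ) ≠ 0))
          exact IsCoprime.of_isCoprime_of_dvd_right h7
            ((dvd_pow_self w₂ (by norm_num : (4:ℕ) ≠ 0)).mul_left 3)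
        have hlt : w₂.natAbs < n := by
          have hK : n = 2*(w₂.natAbs * (w₁.natAbs * m.natAbs)) := by rw [hnabs]; ring
          have h8 : 1 ≤ w₁.natAbs * m.natAbs := Nat.one_le_iff_ne_zero.mpr (by positivity)
          have h9 : w₂.natAbs ≤ w₂.natAbs * (w₁.natAbs * m.natAbs) := by
            simpa using Nat.mul_le_mul_left w₂.natAbs h8
          omega
        obtain ⟨hres1, hres2⟩ := IH (w₂.natAbs) (hn ▸ hlt) w₁ w₂ m rfl hcopw hQnew
        have hw₁1 : w₁ = 1 := eq_one_of_pos_of_sq_le_one hw₁ hres1.le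
        have hw₂1 : w₂ = 1 := eq_one_of_pos_of_sq_le_one hw₂ hres2
        subst hw₁1 hw₂1
        have hnn1 : m^2 = 1 := by rw [hQnew]; ring
        have hm1 : nn^2 = 1 := by rw [hmsq]; ring
        have hXsq : X^2 = 4 := by
          rw [heq2, show m^4 = (m^2)^2 by ring, show nn^4 = (nn^2)^2 by ring, hnn1, hm1]
          ring
        omega
  · -- Y odd
    have hY8 : Y^2 % 8 = 1 := odd_sq_mod8 hY2
    have hY16 : Y^4 % 16 = 1 := odd_pow4_mod16 hY2
    have hXY8 : (X*Y)^2 % 8 = 1 :=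
      odd_sq_mod8 (Int.odd_iff.mp ((Int.odd_iff.mpr hX2).mul (Int.odd_iff.mpr hY2)))
    have hZ0 : Z ≠ 0 := by
      rintro rfl
      have heq : (0:ℤ) = X^4 - 3*((X*Y)^2) + 3*Y^4 := by linear_combination hQ
      omega
    have hZ₀sq : |Z|^2 = Z^2 := sq_abs Z
    set Z₀ := |Z| with hZ₀def
    have hZ₀pos : 0 < Z₀ := abs_pos.mpr hZ0
    have hQ₀ : Z₀^2 = X^4 - 3*(X^2*Y^2) + 3*Y^4 := by rw [hZ₀sq]; linear_combination hQ
    have hprod : (2*Z₀ - (2*X^2 - 3*Y^2)) * (2*Z₀ + (2*X^2 - 3*Y^2)) = 3*Y^4 := by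
      linear_combination 4*hQ₀
    have hc₁odd : (2*Z₀ - (2*X^2 - 3*Y^2)) % 2 = 1 := by omega
    have hc₂odd : (2*Z₀ + (2*X^2 - 3*Y^2)) % 2 = 1 := by omega
    have hpos : 0 < 2*Z₀ - (2*X^2 - 3*Y^2) ∧ 0 < 2*Z₀ + (2*X^2 - 3*Y^2) := by
      have h4 : 0 < (2*Z₀ - (2*X^2 - 3*Y^2)) * (2*Z₀ + (2*X^2 - 3*Y^2)) := by
        rw [hprod]; positivity
      rcases mul_pos_iff.mp h4 with h5 | h5
      · exact h5
      · exfalso; omega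
    have hcop' : IsCoprime (2*Z₀ - (2*X^2 - 3*Y^2)) (2*Z₀ + (2*X^2 - 3*Y^2)) := by
      apply coprime_of_nat_prime_dvd
      intro p pp hpa hpb
      have hp2 : p ≠ 2 := by
        rintro rfl
        rw [Int.dvd_iff_emod_eq_zero] at hpa
        push_cast at hpa
        omega
      have hz4 : (p:ℤ) ∣ 4*Z₀ := by
        have h6 := dvd_add hpa hpb
        rwa [show 2*Z₀ - (2*X^2 - 3*Y^2) + (2*Z₀ + (2*X^2 - 3*Y^2)) = 4*Z₀ by ring] at h6
      have hzA2 : (p:ℤ) ∣ 2*(2*X^2 - 3*Y^2) := by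
        have h6 := dvd_sub hpb hpa
        rwa [show 2*Z₀ + (2*X^2 - 3*Y^2) - (2*Z₀ - (2*X^2 - 3*Y^2)) = 2*(2*X^2-3*Y^2) by ring]
          at h6
      have hzA : (p:ℤ) ∣ 2*X^2 - 3*Y^2 := by
        rcases Int.Prime.dvd_mul' pp hzA2 with h6 | h6
        · exact absurd (prime_eq_two pp (h6.mul_right 2)) hp2
        · exact h6
      have hprod' : (p:ℤ) ∣ 3*Y^4 := hprod ▸ hpa.mul_right _
      rcases Int.Prime.dvd_mul' pp hprod' with h3 | hYd
      · have hp3 : p = 3 := prime_eq_three pp h3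
        subst hp3
        have h6 := dvd_add hzA (⟨Y^2, rfl⟩ : (3:ℤ) ∣ 3*(Y^2))
        rw [show 2*X^2 - 3*Y^2 + 3*Y^2 = 2*X^2 by ring] at h6
        rcases Int.Prime.dvd_mul' pp h6 with h7 | h7
        · norm_num at h7
        · exact h3X (Int.prime_three.dvd_of_dvd_pow h7)
      · have hYp : (p:ℤ) ∣ Y := Int.Prime.dvd_pow' pp hYd
        have h6 := dvd_add hzA (Dvd.dvd.mul_left hYp (3*Y))
        rw [show 2*X^2 - 3*Y^2 + 3*Y*Y = 2*X^2 by ring] at h6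
        rcases Int.Prime.dvd_mul' pp h6 with h7 | h7
        · exact hp2 (by exact_mod_cast prime_eq_two pp (h7.mul_right 2))
        · exact unit_contra pp (hco.isUnit_of_dvd' (Int.Prime.dvd_pow' pp h7) hYp)
    obtain ⟨u, v, hu0, hv0, hs, hcases⟩ := split3 hcop' hpos.1 hpos.2 hprod hY0
    have hsY : u^2*v^2 = Y^2 := by linear_combination hs
    have huodd : u % 2 = 1 := by
      rcases Int.emod_two_eq u with h6 | h6
      · exfalso
        obtain ⟨t, ht⟩ := even_pow4 h6
        rcases hcases with ⟨h7, _⟩ | ⟨h7, _⟩ <;> rw [h7] at hc₁odd <;> omega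
      · exact h6
    have hvodd : v % 2 = 1 := by
      rcases Int.emod_two_eq v with h6 | h6
      · exfalso
        obtain ⟨t, ht⟩ := even_pow4 h6
        rcases hcases with ⟨_, h7⟩ | ⟨_, h7⟩ <;> rw [h7] at hc₂odd <;> omega
      · exact h6
    have hu8 : u^2 % 8 = 1 := odd_sq_mod8 huodd
    have hv8 : v^2 % 8 = 1 := odd_sq_mod8 hvodd
    have hu16 : u^4 % 16 = 1 := odd_pow4_mod16 huodd
    have hv16 : v^4 % 16 = 1 := odd_pow4_mod16 hvodd
    have huv8 : (u*v)^2 % 8 = 1 :=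
      odd_sq_mod8 (Int.odd_iff.mp ((Int.odd_iff.mpr huodd).mul (Int.odd_iff.mpr hvodd)))
    have hcopuv : IsCoprime u v := by
      rcases hcases with ⟨h6, h7⟩ | ⟨h6, h7⟩
      · have h8 : IsCoprime (3*u^4) (v^4) := by rw [← h6, ← h7]; exact hcop'
        have h9 := IsCoprime.of_isCoprime_of_dvd_right h8
          (dvd_pow_self v (by norm_num : (4:ℕ) ≠ 0))
        exact IsCoprime.of_isCoprime_of_dvd_left h9
          ((dvd_pow_self u (by norm_num : (4:ℕ) ≠ 0)).mul_left 3)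
      · have h8 : IsCoprime (u^4) (3*v^4) := by rw [← h6, ← h7]; exact hcop'
        have h9 := IsCoprime.of_isCoprime_of_dvd_left h8
          (dvd_pow_self u (by norm_num : (4:ℕ) ≠ 0))
        exact IsCoprime.of_isCoprime_of_dvd_right h9
          ((dvd_pow_self v (by norm_num : (4:ℕ) ≠ 0)).mul_left 3)
    rcases hcases with ⟨hc₁3, hc₂v⟩ | ⟨hc₁u, hc₂3⟩
    swap
    · -- c₁ = u⁴, c₂ = 3v⁴ : mod 16 contradiction
      exfalso
      have hdd : 3*v^4 - u^4 = 2*(2*X^2 - 3*Y^2) := by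
        rw [← hc₁u, ← hc₂3]; ring
      have h4X : 4*X^2 = 3*v^4 - u^4 + 6*((u*v)^2) := by
        linear_combination -hdd - 6*hs
      omega
    · -- c₁ = 3u⁴, c₂ = v⁴ : continue descent
      have hdd : v^4 - 3*u^4 = 2*(2*X^2 - 3*Y^2) := by
        rw [← hc₂v, ← hc₁3]; ring
      have h4X : 4*X^2 = v^4 - 3*u^4 + 6*((u*v)^2) := by
        linear_combination -hdd - 6*hs
      have hX₀sq : |X|^2 = X^2 := sq_abs X
      set X₀ := |X| with hX₀def
      have hX₀2 : X₀ % 2 = 1 := by rcases abs_cases X with ⟨h5, _⟩ | ⟨h5, _⟩ <;> omega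
      have hX₀pos : 0 < X₀ := by
        have h7 : (0:ℤ) ≤ |X| := abs_nonneg X
        rw [← hX₀def] at h7
        omega
      obtain ⟨p', hp'⟩ : ∃ t, v^2 + 3*u^2 - 2*X₀ = 2*t := ⟨(v^2 + 3*u^2 - 2*X₀)/2, by omega⟩
      obtain ⟨q', hq'⟩ : ∃ t, v^2 + 3*u^2 + 2*X₀ = 2*t := ⟨(v^2 + 3*u^2 + 2*X₀)/2, by omega⟩
      have hsum2 : p' + q' = v^2 + 3*u^2 := by omega
      have hdiff2 : q' - p' = 2*X₀ := by omega
      have hp'odd : p' % 2 = 1 := by omega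
      have hprod2 : p' * q' = 3 * u^4 := by
        have h4 : (2*p') * (2*q') = (v^2+3*u^2)^2 - 4*X₀^2 := by rw [← hp', ← hq']; ring
        have h5 : (v^2+3*u^2)^2 - 4*X₀^2 = 12*u^4 := by
          rw [show (4:ℤ)*X₀^2 = 4*(X₀^2) by ring, hX₀sq]
          linear_combination -h4X
        have h6 : 4*(p'*q') = 12*u^4 := by linear_combination h4 + h5
        omega
      have hpos2 : 0 < p' ∧ 0 < q' := by
        have h4 : 0 < p' * q' := by rw [hprod2]; positivity
        have h5 : 0 < v^2 + 3*u^2 := by positivity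
        rcases mul_pos_iff.mp h4 with h6 | h6
        · exact h6
        · exfalso; omega
      have hcop2 : IsCoprime p' q' := by
        apply coprime_of_nat_prime_dvd
        intro p pp hpa hpb
        have hzS : (p:ℤ) ∣ v^2 + 3*u^2 := hsum2 ▸ dvd_add hpa hpb
        have hzX2 : (p:ℤ) ∣ 2*X₀ := hdiff2 ▸ dvd_sub hpb hpa
        have hp2 : p ≠ 2 := by
          rintro rfl
          rw [Int.dvd_iff_emod_eq_zero] at hpa
          push_cast at hpa
          omega
        have hzX : (p:ℤ) ∣ X := by
          rcases Int.Prime.dvd_mul' pp hzX2 with h6 | h6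
          · exact absurd (prime_eq_two pp (h6.mul_right 2)) hp2
          · rw [hX₀def] at h6; exact (dvd_abs _ _).mp h6
        have hprod' : (p:ℤ) ∣ 3*u^4 := hprod2 ▸ hpa.mul_right q'
        rcases Int.Prime.dvd_mul' pp hprod' with h3 | hud
        · have hp3 : p = 3 := prime_eq_three pp h3
          subst hp3
          exact h3X (by exact_mod_cast hzX)
        · have hup : (p:ℤ) ∣ u := Int.Prime.dvd_pow' pp hud
          have hv2' : (p:ℤ) ∣ v^2 := by
            have h6 := dvd_sub hzS (Dvd.dvd.mul_left hup (3*u))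
            rwa [show v^2 + 3*u^2 - 3*u*u = v^2 by ring] at h6
          exact unit_contra pp (hcopuv.isUnit_of_dvd' hup (Int.Prime.dvd_pow' pp hv2'))
      obtain ⟨w₁, w₂, hw₁, hw₂, hws, hwcases⟩ := split3 hcop2 hpos2.1 hpos2.2 hprod2 hu0.ne'
      have husq : u^2 = w₁^2*w₂^2 := by linear_combination -hws
      have hnabs : n = w₁.natAbs * w₂.natAbs * v.natAbs := by
        have e1 : Y.natAbs = n := hn
        have e2 : (u*v).natAbs = Y.natAbs := natAbs_of_sq_eq hs
        have e3 : (w₁*w₂).natAbs = u.natAbs := natAbs_of_sq_eq hws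
        rw [Int.natAbs_mul] at e2 e3
        rw [← e1, ← e2, ← e3]
      have hw₁a : 1 ≤ w₁.natAbs := by omega
      have hw₂a : 1 ≤ w₂.natAbs := by omega
      have hva : 1 ≤ v.natAbs := by omega
      rcases hwcases with ⟨hP3, hQn⟩ | ⟨hPn, hQ3w⟩
      · -- p' = 3w₁⁴, q' = w₂⁴ : impossible
        exfalso
        have hQnew : v^2 = w₂^4 - 3*w₂^2*w₁^2 + 3*w₁^4 := by
          rw [hP3, hQn] at hsum2
          linear_combination -hsum2 - 3*husq
        have hdval : w₂^4 - 3*w₁^4 = 2*X₀ := by rw [← hP3, ← hQn]; omega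
        have hcopw : IsCoprime w₂ w₁ := by
          have h6 : IsCoprime (3*w₁^4) (w₂^4) := by rw [← hP3, ← hQn]; exact hcop2
          have h7 := IsCoprime.of_isCoprime_of_dvd_right h6
            (dvd_pow_self w₂ (by norm_num : (4:ℕ) ≠ 0))
          exact (IsCoprime.of_isCoprime_of_dvd_left h7
            ((dvd_pow_self w₁ (by norm_num : (4:ℕ) ≠ 0)).mul_left 3)).symm
        by_cases hsmall : w₂.natAbs * v.natAbs = 1
        · -- w₂ = 1, v = 1, then w₁ = 1 and 2X₀ = -2 : contradiction
          have hw₂1 : w₂ = 1 := by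
            have := Nat.eq_one_of_mul_eq_one_right hsmall
            omega
          have hv1 : v = 1 := by
            have := Nat.eq_one_of_mul_eq_one_left hsmall
            omega
          subst hw₂1 hv1
          have h6 : 3*w₁^2*(w₁^2 - 1) = 0 := by linear_combination -hQnew
          have hw₁1 : w₁ = 1 := eq_one_of_cubic hw₁ h6
          subst hw₁1
          omega
        · have hlt : w₁.natAbs < n := by
            have h7 : 2 ≤ w₂.natAbs * v.natAbs := by
              have := Nat.one_le_iff_ne_zero.mpr (by positivity : w₂.natAbs * v.natAbs ≠ 0)
              omega
            have hK : n = w₁.natAbs * (w₂.natAbs * v.natAbs) := by rw [hnabs]; ring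
            have h9 := Nat.mul_le_mul_left w₁.natAbs h7
            omega
          obtain ⟨hres1, hres2⟩ := IH (w₁.natAbs) (hn ▸ hlt) w₂ w₁ v rfl hcopw hQnew
          have hw₁1 : w₁ = 1 := eq_one_of_pos_of_sq_le_one hw₁ hres2
          have hw₂1 : w₂ = 1 := eq_one_of_pos_of_sq_le_one hw₂ hres1.le
          subst hw₁1 hw₂1
          have hv2 : v^2 = 1 := by rw [hQnew]; ring
          have hv1 : v = 1 := eq_one_of_pos_of_sq_le_one hv0 hv2.le
          exact hsmall (by rw [hv1]; rfl)
      · -- p' = w₁⁴, q' = 3w₂⁴ : the surviving branch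
        have hQnew : v^2 = w₁^4 - 3*w₁^2*w₂^2 + 3*w₂^4 := by
          rw [hPn, hQ3w] at hsum2
          linear_combination -hsum2 - 3*husq
        have hdval : 3*w₂^4 - w₁^4 = 2*X₀ := by rw [← hPn, ← hQ3w]; omega
        have hcopw : IsCoprime w₁ w₂ := by
          have h6 : IsCoprime (w₁^4) (3*w₂^4) := by rw [← hPn, ← hQ3w]; exact hcop2
          have h7 := IsCoprime.of_isCoprime_of_dvd_left h6
            (dvd_pow_self w₁ (by norm_num : (4:ℕ) ≠ 0))
          exact IsCoprime.of_isCoprime_of_dvd_right h7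
            ((dvd_pow_self w₂ (by norm_num : (4:ℕ) ≠ 0)).mul_left 3)
        by_cases hsmall : w₁.natAbs * v.natAbs = 1
        · -- the trivial solution : w₁ = v = 1, w₂ = 1, X₀ = 1
          have hw₁1 : w₁ = 1 := by
            have := Nat.eq_one_of_mul_eq_one_right hsmall
            omega
          have hv1 : v = 1 := by
            have := Nat.eq_one_of_mul_eq_one_left hsmall
            omega
          subst hw₁1 hv1
          have h6 : 3*w₂^2*(w₂^2 - 1) = 0 := by linear_combination -hQnew
          have hw₂1 : w₂ = 1 := eq_one_of_cubic hw₂ h6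
          subst hw₂1
          have hX₀1 : X₀ = 1 := by omega
          constructor
          · rw [← hX₀sq, hX₀1]; norm_num
          · have hY1 : Y^2 = 1 := by
              rw [← hsY, husq]; norm_num
            omega
        · exfalso
          have hlt : w₂.natAbs < n := by
            have h7 : 2 ≤ w₁.natAbs * v.natAbs := by
              rcases Nat.lt_or_ge (w₁.natAbs * v.natAbs) 2 with h8 | h8
              · interval_cases h9 : (w₁.natAbs * v.natAbs)
                · exfalso; rcases Nat.mul_eq_zero.mp h9 with h10 | h10 <;> omega
                · exact absurd rfl hsmall
              · exact h8
            have hK : n = w₂.natAbs * (w₁.natAbs * v.natAbs) := by rw [hnabs]; ring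
            have h9 : w₂.natAbs * 2 ≤ w₂.natAbs * (w₁.natAbs * v.natAbs) :=
              Nat.mul_le_mul_left w₂.natAbs h7
            omega
          obtain ⟨hres1, hres2⟩ := IH (w₂.natAbs) (hn ▸ hlt) w₁ w₂ v rfl hcopw hQnew
          have hw₁1 : w₁ = 1 := eq_one_of_pos_of_sq_le_one hw₁ hres1.le
          have hw₂1 : w₂ = 1 := eq_one_of_pos_of_sq_le_one hw₂ hres2
          subst hw₁1 hw₂1
          have hv2 : v^2 = 1 := by rw [hQnew]; ring
          have hv1 : v = 1 := eq_one_of_pos_of_sq_le_one hv0 hv2.le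
          exact hsmall (by rw [hv1]; rfl)


private lemma F3_pos {a b : ℤ} (hb : 0 < b) : 0 < a^2 + a*b + b^2 := by
  nlinarith [sq_nonneg (2*a + b), sq_nonneg b]

private lemma one_le_sq {f : ℤ} (h : f ≠ 0) : 1 ≤ f^2 := by
  rcases lt_or_gt_of_ne h with h1 | h1 <;> nlinarith

/-- Integer form of the problem. -/
private lemma integer_case {a b c : ℤ} (hco : IsCoprime a b) (hb : 0 < b)
    (h : c ^ 2 = a * (a ^ 3 - b ^ 3)) :
    (a = 0 ∧ b = 1) ∨ (a = 1 ∧ b = 1) ∨ (a = -1 ∧ b = 2 ∧ c ^ 2 = 9) := by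
  rcases eq_or_ne a 0 with rfl | ha0
  · left
    refine ⟨rfl, ?_⟩
    have h1 := isCoprime_zero_left.mp hco
    rcases Int.isUnit_iff.mp h1 with rfl | rfl
    · rfl
    · omega
  rcases eq_or_ne a b with rfl | hab
  · right; left
    have h1 : IsUnit a := hco.isUnit_of_dvd' dvd_rfl dvd_rfl
    rcases Int.isUnit_iff.mp h1 with rfl | rfl
    · exact ⟨rfl, rfl⟩
    · omega
  have hF3 : 0 < a^2 + a*b + b^2 := F3_pos hb
  by_cases h3 : (3:ℤ) ∣ (a - b)
  · -- case 3 ∣ a - b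
    obtain ⟨k, hk⟩ := h3
    have hb' : b = a - 3*k := by omega
    subst hb'
    have h3a : ¬ (3:ℤ) ∣ a := by
      intro h4
      have h5 : (3:ℤ) ∣ a - 3*k := by
        obtain ⟨t, rfl⟩ := h4
        exact ⟨t - k, by ring⟩
      have h6 := hco.isUnit_of_dvd' h4 h5
      rw [Int.isUnit_iff] at h6
      rcases h6 with h6 | h6 <;> norm_num at h6
    have hk0 : k ≠ 0 := by rintro rfl; simp at hab
    have hGpos : 0 < 3*k^2 + a*(a - 3*k) := by nlinarith [hF3]
    have h9 : c^2 = 9*(a*(k*(3*k^2 + a*(a - 3*k)))) := by linear_combination h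
    have h3c : (3:ℤ) ∣ c := by
      apply Int.prime_three.dvd_of_dvd_pow (n := 2)
      exact ⟨3*(a*(k*(3*k^2 + a*(a - 3*k)))), by linarith⟩
    obtain ⟨c₁, rfl⟩ := h3c
    have hc₁ : c₁^2 = a*(k*(3*k^2 + a*(a - 3*k))) := by
      have h10 : 9*c₁^2 = 9*(a*(k*(3*k^2 + a*(a - 3*k)))) := by linear_combination h9
      linarith
    have cop_ak : IsCoprime a k := by
      apply coprime_of_nat_prime_dvd
      intro p pp hpa hpk
      have h5 : (p:ℤ) ∣ a - 3*k := dvd_sub hpa (hpk.mul_left 3)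
      exact unit_contra pp (hco.isUnit_of_dvd' hpa h5)
    have cop_aG : IsCoprime a (3*k^2 + a*(a - 3*k)) := by
      apply coprime_of_nat_prime_dvd
      intro p pp hpa hpG
      have h5 : (p:ℤ) ∣ 3*k^2 := by
        have h6 := dvd_sub hpG (hpa.mul_right (a - 3*k))
        rwa [show 3*k^2 + a*(a - 3*k) - a*(a - 3*k) = 3*k^2 by ring] at h6
      rcases Int.Prime.dvd_mul' pp h5 with h6 | h6
      · have := prime_eq_three pp h6
        subst this
        exact h3a (by exact_mod_cast hpa)
      · have hpk : (p:ℤ) ∣ k := Int.Prime.dvd_pow' pp h6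
        have h7 : (p:ℤ) ∣ a - 3*k := dvd_sub hpa (hpk.mul_left 3)
        exact unit_contra pp (hco.isUnit_of_dvd' hpa h7)
    have cop_kG : IsCoprime k (3*k^2 + a*(a - 3*k)) := by
      apply coprime_of_nat_prime_dvd
      intro p pp hpk hpG
      have h5 : (p:ℤ) ∣ a*a := by
        have h6 := dvd_sub hpG (hpk.mul_left (3*k))
        have h7 := dvd_add h6 (hpk.mul_left (3*a))
        rwa [show 3*k^2 + a*(a - 3*k) - 3*k*k + 3*a*k = a*a by ring] at h7
      have hpa : (p:ℤ) ∣ a := by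
        rcases Int.Prime.dvd_mul' pp h5 with h6 | h6 <;> exact h6
      have h7 : (p:ℤ) ∣ a - 3*k := dvd_sub hpa (hpk.mul_left 3)
      exact unit_contra pp (hco.isUnit_of_dvd' hpa h7)
    obtain ⟨e, he⟩ := Int.sq_of_isCoprime (cop_ak.mul_right cop_aG) hc₁.symm
    obtain ⟨f, hf⟩ := Int.sq_of_isCoprime (cop_ak.symm.mul_right cop_kG)
      (show k*(a*(3*k^2 + a*(a - 3*k))) = c₁^2 by linear_combination -hc₁)
    obtain ⟨s, hsg⟩ := Int.sq_of_isCoprime (cop_aG.symm.mul_right cop_kG.symm)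
      (show (3*k^2 + a*(a - 3*k))*(a*k) = c₁^2 by linear_combination -hc₁)
    have hG : 3*k^2 + a*(a - 3*k) = s^2 := by
      rcases hsg with h5 | h5
      · exact h5
      · exfalso
        have h6 : (0:ℤ) ≤ s^2 := sq_nonneg s
        omega
    have hs0 : s ≠ 0 := by rintro rfl; simp at hG; omega
    have he0 : e ≠ 0 := by
      rintro rfl
      rcases he with h5 | h5 <;> simp at h5 <;> exact ha0 h5
    have hf0 : f ≠ 0 := by
      rintro rfl
      rcases hf with h5 | h5 <;> simp at h5 <;> exact hk0 h5
    rcases he with he | he <;> rcases hf with hf | hf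
    · -- a = e², k = f² : keyQ forces b ≤ 0, contradiction
      exfalso
      subst he hf
      have cop_ef : IsCoprime e f := by
        have h6 := IsCoprime.of_isCoprime_of_dvd_left cop_ak
          (dvd_pow_self e (by norm_num : (2:ℕ) ≠ 0))
        exact IsCoprime.of_isCoprime_of_dvd_right h6
          (dvd_pow_self f (by norm_num : (2:ℕ) ≠ 0))
      have hQs : s^2 = e^4 - 3*e^2*f^2 + 3*f^4 := by linear_combination -hG
      obtain ⟨hE, hF⟩ := keyQ (f.natAbs) e f s rfl cop_ef hQs
      have hf2 : f^2 = 1 := le_antisymm hF (one_le_sq hf0)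
      linarith [hb, hE, hf2]
    · -- mixed signs : contradiction
      exfalso
      subst he hf
      have h5 : c₁^2 = -((e*f*s)^2) := by rw [hc₁, hG]; ring
      have h6 : (e*f*s)^2 = 0 := by nlinarith [sq_nonneg c₁, sq_nonneg (e*f*s)]
      have h7 := pow_eq_zero_iff (n := 2) (by norm_num) |>.mp h6
      rcases mul_eq_zero.mp h7 with h8 | h8
      · rcases mul_eq_zero.mp h8 with h9 | h9
        · exact he0 h9
        · exact hf0 h9
      · exact hs0 h8
    · -- mixed signs : contradiction
      exfalso
      subst he hf
      have h5 : c₁^2 = -((e*f*s)^2) := by rw [hc₁, hG]; ring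
      have h6 : (e*f*s)^2 = 0 := by nlinarith [sq_nonneg c₁, sq_nonneg (e*f*s)]
      have h7 := pow_eq_zero_iff (n := 2) (by norm_num) |>.mp h6
      rcases mul_eq_zero.mp h7 with h8 | h8
      · rcases mul_eq_zero.mp h8 with h9 | h9
        · exact he0 h9
        · exact hf0 h9
      · exact hs0 h8
    · -- a = -e², k = -f² : the surviving case
      subst he hf
      have cop_ef : IsCoprime e f := by
        have h6 := IsCoprime.of_isCoprime_of_dvd_left cop_ak
          (⟨-e, by ring⟩ : e ∣ -e^2)
        exact IsCoprime.of_isCoprime_of_dvd_right h6 (⟨-f, by ring⟩ : f ∣ -f^2)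
      have hQs : s^2 = e^4 - 3*e^2*f^2 + 3*f^4 := by linear_combination -hG
      obtain ⟨hE, hF⟩ := keyQ (f.natAbs) e f s rfl cop_ef hQs
      have hf2 : f^2 = 1 := le_antisymm hF (one_le_sq hf0)
      have he4 : e^4 = 1 := by rw [show e^4 = (e^2)^2 by ring, hE]; norm_num
      have hf4 : f^4 = 1 := by rw [show f^4 = (f^2)^2 by ring, hf2]; norm_num
      have hef : e^2*f^2 = 1 := by rw [hE, hf2]; norm_num
      have hs2 : s^2 = 1 := by rw [hQs]; linarith
      have hc12 : c₁^2 = 1 := by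
        have h5 : c₁^2 = e^2*(f^2*s^2) := by rw [hc₁, hG]; ring
        rw [hE, hf2, hs2] at h5
        linarith
      refine Or.inr (Or.inr ⟨by linarith, by linarith, by linarith⟩)
  · -- case 3 ∤ a - b : all subcases are impossible
    exfalso
    have cop12 : IsCoprime a (a - b) := by
      apply coprime_of_nat_prime_dvd
      intro p pp hpa hpd
      have h5 : (p:ℤ) ∣ b := by
        have h6 := dvd_sub hpa hpd
        rwa [show a - (a - b) = b by ring] at h6
      exact unit_contra pp (hco.isUnit_of_dvd' hpa h5)
    have cop13 : IsCoprime a (a^2 + a*b + b^2) := by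
      apply coprime_of_nat_prime_dvd
      intro p pp hpa hpF
      have h5 : (p:ℤ) ∣ b*b := by
        have h6 := dvd_sub hpF (hpa.mul_right (a + b))
        rwa [show a^2 + a*b + b^2 - a*(a + b) = b*b by ring] at h6
      have hpb : (p:ℤ) ∣ b := by rcases Int.Prime.dvd_mul' pp h5 with h6 | h6 <;> exact h6
      exact unit_contra pp (hco.isUnit_of_dvd' hpa hpb)
    have cop23 : IsCoprime (a - b) (a^2 + a*b + b^2) := by
      apply coprime_of_nat_prime_dvd
      intro p pp hpd hpF
      have h5 : (p:ℤ) ∣ 3*(a*b) := by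
        have h6 := dvd_sub hpF (hpd.mul_right (a - b))
        rwa [show a^2 + a*b + b^2 - (a - b)*(a - b) = 3*(a*b) by ring] at h6
      rcases Int.Prime.dvd_mul' pp h5 with h6 | h6
      · have := prime_eq_three pp h6
        subst this
        exact h3 (by exact_mod_cast hpd)
      · rcases Int.Prime.dvd_mul' pp h6 with h7 | h7
        · have h8 : (p:ℤ) ∣ b := by
            have h9 := dvd_sub h7 hpd
            rwa [show a - (a - b) = b by ring] at h9
          exact unit_contra pp (hco.isUnit_of_dvd' h7 h8)
        · have h8 : (p:ℤ) ∣ a := by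
            have h9 := dvd_add hpd h7
            rwa [show a - b + b = a by ring] at h9
          exact unit_contra pp (hco.isUnit_of_dvd' h8 h7)
    obtain ⟨e, he⟩ := Int.sq_of_isCoprime (cop12.mul_right cop13)
      (show a * ((a - b)*(a^2 + a*b + b^2)) = c^2 by linear_combination -h)
    obtain ⟨f, hf⟩ := Int.sq_of_isCoprime (cop12.symm.mul_right cop23)
      (show (a - b) * (a*(a^2 + a*b + b^2)) = c^2 by linear_combination -h)
    obtain ⟨s, hsg⟩ := Int.sq_of_isCoprime (cop13.symm.mul_right cop23.symm)
      (show (a^2 + a*b + b^2) * (a*(a - b)) = c^2 by linear_combination -h)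
    have hF : a^2 + a*b + b^2 = s^2 := by
      rcases hsg with h5 | h5
      · exact h5
      · exfalso
        have h6 : (0:ℤ) ≤ s^2 := sq_nonneg s
        omega
    have hs0 : s ≠ 0 := by rintro rfl; simp at hF; omega
    have he0 : e ≠ 0 := by
      rintro rfl
      rcases he with h5 | h5 <;> simp at h5 <;> exact ha0 h5
    have hf0 : f ≠ 0 := by
      rintro rfl
      rcases hf with h5 | h5 <;> simp at h5 <;> (exact hab (by linarith))
    have hkey : c^2 = a*((a - b)*(a^2 + a*b + b^2)) := by linear_combination h
    rcases he with he | he <;> rcases hf with hf | hf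
    · -- a = e², a - b = f²
      have hb2 : b = e^2 - f^2 := by omega
      subst he
      subst hb2
      have cop_fe : IsCoprime f e := by
        have h6 := IsCoprime.of_isCoprime_of_dvd_left cop12
          (dvd_pow_self e (by norm_num : (2:ℕ) ≠ 0))
        exact (IsCoprime.of_isCoprime_of_dvd_right h6
          (⟨f, by ring⟩ : f ∣ e^2 - (e^2 - f^2))).symm
      have hQs : s^2 = f^4 - 3*f^2*e^2 + 3*e^4 := by linear_combination -hF
      obtain ⟨hE, hF2⟩ := keyQ (e.natAbs) f e s rfl cop_fe hQs
      have he2 : e^2 = 1 := le_antisymm hF2 (one_le_sq he0)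
      linarith [hb, hE, he2]
    · -- a = e², a - b = -f² : mixed
      rw [hF, hf, he] at hkey
      have h5 : c^2 = -((e*f*s)^2) := by rw [hkey]; ring
      have h6 : (e*f*s)^2 = 0 := by nlinarith [sq_nonneg c, sq_nonneg (e*f*s)]
      have h7 := pow_eq_zero_iff (n := 2) (by norm_num) |>.mp h6
      rcases mul_eq_zero.mp h7 with h8 | h8
      · rcases mul_eq_zero.mp h8 with h9 | h9
        · exact he0 h9
        · exact hf0 h9
      · exact hs0 h8
    · -- a = -e², a - b = f² : mixed
      rw [hF, hf, he] at hkey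
      have h5 : c^2 = -((e*f*s)^2) := by rw [hkey]; ring
      have h6 : (e*f*s)^2 = 0 := by nlinarith [sq_nonneg c, sq_nonneg (e*f*s)]
      have h7 := pow_eq_zero_iff (n := 2) (by norm_num) |>.mp h6
      rcases mul_eq_zero.mp h7 with h8 | h8
      · rcases mul_eq_zero.mp h8 with h9 | h9
        · exact he0 h9
        · exact hf0 h9
      · exact hs0 h8
    · -- a = -e², a - b = -f²
      have hb2 : b = f^2 - e^2 := by omega
      subst he
      subst hb2
      have cop_fe : IsCoprime f e := by
        have h6 := IsCoprime.of_isCoprime_of_dvd_left cop12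
          (⟨-e, by ring⟩ : e ∣ -e^2)
        exact (IsCoprime.of_isCoprime_of_dvd_right h6
          (⟨-f, by ring⟩ : f ∣ -e^2 - (f^2 - e^2))).symm
      have hQs : s^2 = f^4 - 3*f^2*e^2 + 3*e^4 := by linear_combination -hF
      obtain ⟨hE, hF2⟩ := keyQ (e.natAbs) f e s rfl cop_fe hQs
      have he2 : e^2 = 1 := le_antisymm hF2 (one_le_sq he0)
      linarith [hb, hE, he2]

/-- The only pairs of rational numbers `(w, z)` satisfying `z² = w(w³ − 1)` are `(0, 0)`,
`(1, 0)`, `(−1/2, 3/4)` and `(−1/2, −3/4)`; in particular, for `w ∉ {0, 1, −1/2}` the rational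
number `w(w³ − 1)` is never a square. -/
theorem rational_points_z2_eq_w4_sub_w :
    ∀ w z : ℚ, z ^ 2 = w * (w ^ 3 - 1) ↔
      (w = 0 ∧ z = 0) ∨ (w = 1 ∧ z = 0) ∨
        (w = -1/2 ∧ z = 3/4) ∨ (w = -1/2 ∧ z = -3/4) := by
  intro w z
  constructor
  · intro h
    have hb : (0:ℤ) < (w.den:ℤ) := by exact_mod_cast w.pos
    have hden : ((w.den:ℚ)) ≠ 0 := by
      have := w.pos
      positivity
    have hco : IsCoprime w.num ((w.den:ℤ)) := by
      rw [Int.isCoprime_iff_gcd_eq_one]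
      simpa [Int.gcd] using w.reduced
    have h1 : (w.num:ℚ) = w * (w.den:ℚ) := (Rat.mul_den_eq_num w).symm
    have hkey : (z * ((w.den:ℚ))^2)^2 = ((w.num * (w.num^3 - ((w.den:ℤ))^3) : ℤ) : ℚ) := by
      push_cast
      calc (z * ((w.den:ℚ))^2)^2 = (z^2) * ((w.den:ℚ))^4 := by ring
      _ = (w * (w^3 - 1)) * ((w.den:ℚ))^4 := by rw [h]
      _ = (w * ((w.den:ℚ))) * ((w*((w.den:ℚ)))^3 - ((w.den:ℚ))^3) := by ring
      _ = ((w.num:ℚ)) * (((w.num:ℚ))^3 - ((w.den:ℚ))^3) := by rw [← h1]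
    set q : ℚ := z * ((w.den:ℚ))^2 with hqdef
    have hqden : q.den = 1 := by
      have h2 : (q*q).den = 1 := by
        rw [show q*q = q^2 by ring, hkey]
        exact Rat.den_intCast _
      rw [Rat.mul_self_den] at h2
      exact Nat.eq_one_of_mul_eq_one_right h2
    have hcq : ((q.num:ℤ):ℚ) = q := by
      conv_rhs => rw [← Rat.num_div_den q]
      rw [hqden]
      simp
    have hc2 : q.num^2 = w.num * (w.num^3 - ((w.den:ℤ))^3) := by
      have h4 : ((q.num:ℤ):ℚ)^2 = ((w.num * (w.num^3 - ((w.den:ℤ))^3) : ℤ) : ℚ) := by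
        rw [hcq]; exact hkey
      exact_mod_cast h4
    rcases integer_case hco hb hc2 with ⟨hA, hB⟩ | ⟨hA, hB⟩ | ⟨hA, hB, hC⟩
    · left
      have hw : w = 0 := by
        rw [← Rat.num_div_den w, hA]
        simp
      refine ⟨hw, ?_⟩
      rw [hw] at h
      simpa using pow_eq_zero_iff (n := 2) (by norm_num) |>.mp (by simpa using h)
    · right; left
      have hden1 : ((w.den:ℚ)) = 1 := by exact_mod_cast hB
      have hw : w = 1 := by
        rw [← Rat.num_div_den w, hA, hden1]
        norm_num
      refine ⟨hw, ?_⟩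
      rw [hw] at h
      simpa using pow_eq_zero_iff (n := 2) (by norm_num) |>.mp (by rw [h]; ring)
    · right; right
      have hden2 : ((w.den:ℚ)) = 2 := by exact_mod_cast hB
      have hw : w = -1/2 := by
        rw [← Rat.num_div_den w, hA, hden2]
        norm_num
      have hc3 : q.num = 3 ∨ q.num = -3 := by
        have h5 : (q.num - 3)*(q.num + 3) = 0 := by linear_combination hC
        rcases mul_eq_zero.mp h5 with h6 | h6
        · left; linarith
        · right; linarith
      have hzq : z * 4 = ((q.num:ℤ):ℚ) := by
        rw [hcq, hqdef, hden2]
        ring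
      rcases hc3 with h6 | h6
      · left
        refine ⟨hw, ?_⟩
        rw [h6] at hzq
        push_cast at hzq
        linarith
      · right
        refine ⟨hw, ?_⟩
        rw [h6] at hzq
        push_cast at hzq
        linarith
  · rintro (⟨rfl, rfl⟩ | ⟨rfl, rfl⟩ | ⟨rfl, rfl⟩ | ⟨rfl, rfl⟩) <;> norm_num
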